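/- Let K be a field of characteristic different from 2 and R = K[x,y]/(y² − x²(x+1)) the coordinate ring of the nodal cubic. Then the map sending x to z²−1 and y to z(z²−1) induces a ring isomorphism from R onto the subring K[z²−1, z(z²−1)] of K[z], and for every nonzero non-invertible ideal I of R, Fitt₁(I) equals the conductor K[z](z²−1) (viewed inside R), which is generated by the images of x and y. -/

import Mathlib

/-- The second Fitting ideal of a two-generated ideal, computed from the generating pair
`(a, b)`: the ideal generated by all coefficients involved in a relation
`r * a + s * b = 0`. -/
def relFittingIdeal {R : Type*} [CommRing R] (a b : R) : Ideal R :=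
  Ideal.span {r : R | (∃ s, r * a + s * b = 0) ∨ (∃ s, s * a + r * b = 0)}

/-- The coordinate ring `K[x,y]/(y² - x²(x+1))` of the nodal plane cubic. -/
def NodalCubicRing (K : Type) [Field K] : Type :=
  MvPolynomial (Fin 2) K ⧸
    Ideal.span {(MvPolynomial.X 1 : MvPolynomial (Fin 2) K) ^ 2 -
      MvPolynomial.X 0 ^ 2 * (MvPolynomial.X 0 + 1)}

noncomputable instance (K : Type) [Field K] : CommRing (NodalCubicRing K) := by
  unfold NodalCubicRing; infer_instance

noncomputable instance (K : Type) [Field K] : Algebra K (NodalCubicRing K) := by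
  unfold NodalCubicRing; infer_instance

/-- The image of `x` in the nodal cubic coordinate ring. -/
noncomputable def nodalX (K : Type) [Field K] : NodalCubicRing K :=
  Ideal.Quotient.mk _ (MvPolynomial.X 0)

/-- The image of `y` in the nodal cubic coordinate ring. -/
noncomputable def nodalY (K : Type) [Field K] : NodalCubicRing K :=
  Ideal.Quotient.mk _ (MvPolynomial.X 1)

/-!
The parametrization identifies `R` with `S = K + (z² - 1)K[z] = {f | f(1) = f(-1)}`, and the
ideal `(x, y)` with the conductor `(z² - 1)K[z]`. Write the images of `a, b` as `D A, D B` with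
`A, B` coprime; the relations `r a + s b = 0` then correspond to the pairs `(τ B, -τ A)`.
If `(A(1), B(1))` and `(A(-1), B(-1))` are proportional, a Bézout identity `P A + Q B = 1` can be
chosen with `P A, P B, Q A, Q B ∈ S`, and `P / D, Q / D` invert `I`. Otherwise `τ A, τ B ∈ S`
forces `τ(±1) = 0`, so every relation coefficient lies in the conductor; conversely every `c` in
the conductor is `c U A + c V B`, a sum of two relation coefficients.
-/

open Polynomial

theorem exists_eq_mul_isCoprime {R : Type*} [CommRing R] [IsDomain R] [IsBezout R] [GCDMonoid R]
    {A B : R} (h : A ≠ 0 ∨ B ≠ 0) :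
    ∃ D A' B', D ≠ 0 ∧ A = D * A' ∧ B = D * B' ∧ IsCoprime A' B' := by
  obtain ⟨A', B', hA, hB, hu⟩ := extract_gcd A B
  refine ⟨gcd A B, A', B', fun h0 ↦ ?_, hA, hB, (gcd_isUnit_iff _ _).mp hu⟩
  obtain ⟨rfl, rfl⟩ := (gcd_eq_zero_iff A B).mp h0
  simp at h

theorem Submodule.map_span_pair_mul_one_div_eq_one {R A : Type*} [CommRing R] [CommRing A]
    [Algebra R A] {a b : R} {h₁ h₂ : A}
    (h₁a : h₁ * algebraMap R A a ∈ (1 : Submodule R A))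
    (h₁b : h₁ * algebraMap R A b ∈ (1 : Submodule R A))
    (h₂a : h₂ * algebraMap R A a ∈ (1 : Submodule R A))
    (h₂b : h₂ * algebraMap R A b ∈ (1 : Submodule R A))
    (h : algebraMap R A a * h₁ + algebraMap R A b * h₂ = 1) :
    map (Algebra.linearMap R A) (Ideal.span {a, b}) *
      (1 / map (Algebra.linearMap R A) (Ideal.span {a, b})) = 1 := by
  have hJ : map (Algebra.linearMap R A) (Ideal.span {a, b}) =
      span R {algebraMap R A a, algebraMap R A b} := by
    rw [Ideal.span, map_span, Set.image_pair]
    rfl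
  have mem_one_div : ∀ g : A, g * algebraMap R A a ∈ (1 : Submodule R A) →
      g * algebraMap R A b ∈ (1 : Submodule R A) →
      g ∈ 1 / map (Algebra.linearMap R A) (Ideal.span {a, b}) := fun g ga gb ↦ by
    rw [mem_div_iff_forall_mul_mem, hJ]
    intro y hy
    obtain ⟨r, s, rfl⟩ := mem_span_pair.mp hy
    rw [mul_add, mul_smul_comm, mul_smul_comm]
    exact add_mem (smul_mem _ r ga) (smul_mem _ s gb)
  refine le_antisymm mul_one_div_le_one (one_le.mpr ?_)
  rw [← h, hJ]
  exact add_mem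
    (mul_mem_mul (subset_span (by simp)) (hJ ▸ mem_one_div h₁ h₁a h₁b))
    (mul_mem_mul (subset_span (by simp)) (hJ ▸ mem_one_div h₂ h₂a h₂b))

theorem relFittingIdeal_comm {R : Type*} [CommRing R] (a b : R) :
    relFittingIdeal a b = relFittingIdeal b a := by
  simp only [relFittingIdeal, add_comm, or_comm]

namespace Polynomial

theorem exists_eq_comp_add_X_mul_comp {R : Type*} [CommRing R] (f : R[X]) :
    ∃ P Q : R[X], f = P.comp (X ^ 2 - 1) + X * Q.comp (X ^ 2 - 1) := by
  induction f using Polynomial.induction_on with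
  | C a => exact ⟨C a, 0, by simp⟩
  | add f g hf hg =>
    obtain ⟨P₁, Q₁, rfl⟩ := hf
    obtain ⟨P₂, Q₂, rfl⟩ := hg
    exact ⟨P₁ + P₂, Q₁ + Q₂, by simp only [add_comp]; ring⟩
  | monomial n a ih =>
    obtain ⟨P, Q, hPQ⟩ := ih
    refine ⟨(X + 1) * Q, P, ?_⟩
    rw [pow_succ, ← mul_assoc, hPQ, mul_comp, add_comp, X_comp, one_comp]
    ring

theorem eq_zero_of_comp_add_X_mul_comp_eq_zero {R : Type*} [CommRing R] [IsDomain R]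
    {P Q : R[X]} (h : P.comp (X ^ 2 - 1) + X * Q.comp (X ^ 2 - 1) = 0) : P = 0 ∧ Q = 0 := by
  have hdeg : (X ^ 2 - 1 : R[X]).natDegree = 2 := by
    simpa using natDegree_X_pow_sub_C (n := 2) (r := (1 : R))
  have hQ : Q = 0 := by
    by_contra hQ
    have hQt : Q.comp (X ^ 2 - 1) ≠ 0 := by simp [comp_eq_zero_iff, hQ]
    -- `P(X² - 1)` has even degree, `X Q(X² - 1)` odd degree
    have := congrArg natDegree (eq_neg_of_add_eq_zero_left h)
    rw [natDegree_neg, natDegree_X_mul hQt, natDegree_comp, natDegree_comp, hdeg] at this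
    omega
  subst hQ
  simpa [comp_eq_zero_iff] using h

variable {K : Type*} [Field K]

theorem X_sq_sub_one_dvd_iff (h2 : (2 : K) ≠ 0) {f : K[X]} :
    X ^ 2 - 1 ∣ f ↔ f.eval 1 = 0 ∧ f.eval (-1) = 0 := by
  have hcop : IsCoprime (X - C (1 : K)) (X - C (-1)) :=
    isCoprime_X_sub_C_of_isUnit_sub (by simpa [one_add_one_eq_two] using h2)
  have hfac : (X ^ 2 - 1 : K[X]) = (X - C 1) * (X - C (-1)) := by
    simp only [map_one, map_neg, sub_neg_eq_add]
    ring
  rw [hfac]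
  exact ⟨fun h ↦ ⟨dvd_iff_isRoot.mp ((dvd_mul_right _ _).trans h),
      dvd_iff_isRoot.mp ((dvd_mul_left _ _).trans h)⟩,
    fun h ↦ hcop.mul_dvd (dvd_iff_isRoot.mpr h.1) (dvd_iff_isRoot.mpr h.2)⟩

theorem exists_eval_one_eval_neg_one (h2 : (2 : K) ≠ 0) (c d : K) :
    ∃ p : K[X], p.eval 1 = c ∧ p.eval (-1) = d :=
  ⟨C ((c + d) / 2) + C ((c - d) / 2) * X,
    by simp only [eval_add, eval_C, eval_mul, eval_X]; field_simp; ring,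
    by simp only [eval_add, eval_C, eval_mul, eval_X]; field_simp; ring⟩

theorem X_sq_sub_one_dvd_of_mul_add_mul_eq_zero (h2 : (2 : K) ≠ 0) {A B r s : K[X]}
    (hAB : IsCoprime A B) (hΔ : A.eval 1 * B.eval (-1) ≠ A.eval (-1) * B.eval 1)
    (hr : r.eval 1 = r.eval (-1)) (hs : s.eval 1 = s.eval (-1)) (h : r * A + s * B = 0) :
    X ^ 2 - 1 ∣ r := by
  have hB : B ≠ 0 := by rintro rfl; simp at hΔ
  obtain ⟨τ, rfl⟩ : B ∣ r := hAB.symm.dvd_of_dvd_mul_right ⟨-s, by linear_combination h⟩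
  have hsτ : s = -(τ * A) := by
    refine mul_left_cancel₀ hB ?_
    linear_combination h
  subst hsτ
  simp only [eval_mul, eval_neg, neg_inj] at hr hs
  refine dvd_mul_of_dvd_right ((X_sq_sub_one_dvd_iff h2).mpr ⟨?_, ?_⟩) B
  · refine (mul_eq_zero.mp ?_).resolve_right (sub_ne_zero.mpr hΔ)
    linear_combination B.eval (-1) * hs - A.eval (-1) * hr
  · refine (mul_eq_zero.mp ?_).resolve_right (sub_ne_zero.mpr hΔ)
    linear_combination B.eval 1 * hs - A.eval 1 * hr

theorem exists_mul_add_mul_eq_one_of_eval (h2 : (2 : K) ≠ 0) {A B : K[X]} (hAB : IsCoprime A B)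
    (hΔ : A.eval 1 * B.eval (-1) = A.eval (-1) * B.eval 1) :
    ∃ P Q : K[X], P * A + Q * B = 1 ∧
      ∀ g ∈ ({P, Q} : Set K[X]), ∀ f ∈ ({A, B} : Set K[X]), (g * f).eval 1 = (g * f).eval (-1) := by
  obtain ⟨U, V, hUV⟩ := hAB
  have e₁ := congrArg (eval 1) hUV
  have e₂ := congrArg (eval (-1)) hUV
  simp only [eval_add, eval_mul, eval_one] at e₁ e₂
  -- `k` is the proportionality factor; `P₀, Q₀` have the values at `±1` it forces, and
  -- correcting their Bézout defect `E` by `E • (U, V)` keeps these values since `E(±1) = 0`.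
  set k := U.eval (-1) * A.eval 1 + V.eval (-1) * B.eval 1
  have hkA : k * A.eval (-1) = A.eval 1 := by linear_combination A.eval 1 * e₂ - V.eval (-1) * hΔ
  have hkB : k * B.eval (-1) = B.eval 1 := by linear_combination B.eval 1 * e₂ + U.eval (-1) * hΔ
  obtain ⟨P₀, hP₀₁, hP₀₂⟩ := exists_eval_one_eval_neg_one h2 (U.eval 1) (k * U.eval 1)
  obtain ⟨Q₀, hQ₀₁, hQ₀₂⟩ := exists_eval_one_eval_neg_one h2 (V.eval 1) (k * V.eval 1)
  set E := P₀ * A + Q₀ * B - 1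
  have hE₁ : E.eval 1 = 0 := by simp [E, hP₀₁, hQ₀₁, e₁]
  have hE₂ : E.eval (-1) = 0 := by
    simp only [E, eval_sub, eval_add, eval_mul, eval_one, hP₀₂, hQ₀₂]
    linear_combination U.eval 1 * hkA + V.eval 1 * hkB + e₁
  refine ⟨P₀ - E * U, Q₀ - E * V, by linear_combination (-E) * hUV, ?_⟩
  simp only [Set.mem_insert_iff, Set.mem_singleton_iff]
  rintro g (rfl | rfl) f (rfl | rfl) <;>
    simp only [eval_mul, eval_sub, hE₁, hE₂, hP₀₁, hP₀₂, hQ₀₁, hQ₀₂, zero_mul, sub_zero]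
  · linear_combination -U.eval 1 * hkA
  · linear_combination -U.eval 1 * hkB
  · linear_combination -V.eval 1 * hkA
  · linear_combination -V.eval 1 * hkB

end Polynomial

namespace NodalCubicRing

variable (K : Type) [Field K]

theorem nodalY_sq : nodalY K ^ 2 = nodalX K ^ 2 * (nodalX K + 1) := by
  rw [← sub_eq_zero]
  exact Ideal.Quotient.eq_zero_iff_mem.mpr (Ideal.subset_span rfl)

theorem exists_eq_aeval_add_aeval_mul_nodalY (r : NodalCubicRing K) :
    ∃ P Q : K[X], r = aeval (nodalX K) P + aeval (nodalX K) Q * nodalY K := by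
  let mk : MvPolynomial (Fin 2) K →ₐ[K] NodalCubicRing K := Ideal.Quotient.mkₐ K _
  obtain ⟨p, rfl⟩ : ∃ p, mk p = r := Ideal.Quotient.mkₐ_surjective K _ r
  induction p using MvPolynomial.induction_on with
  | C a => exact ⟨C a, 0, by simp⟩
  | add p q hp hq =>
    obtain ⟨P₁, Q₁, h₁⟩ := hp
    obtain ⟨P₂, Q₂, h₂⟩ := hq
    exact ⟨P₁ + P₂, Q₁ + Q₂, by rw [map_add, h₁, h₂]; simp only [map_add]; ring⟩
  | mul_X p i hp =>
    obtain ⟨P, Q, h⟩ := hp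
    rw [map_mul, h]
    fin_cases i
    · refine ⟨P * X, Q * X, ?_⟩
      change _ * nodalX K = _
      simp only [map_mul, aeval_X]
      ring
    · refine ⟨Q * (X ^ 2 * (X + 1)), P, ?_⟩
      change _ * nodalY K = _
      simp only [map_mul, map_pow, map_add, aeval_X, map_one]
      linear_combination aeval (nodalX K) Q * nodalY_sq K

noncomputable def param : NodalCubicRing K →ₐ[K] K[X] :=
  Ideal.Quotient.liftₐ _ (MvPolynomial.aeval ![X ^ 2 - 1, X * (X ^ 2 - 1)]) fun p hp ↦ by
    obtain ⟨q, rfl⟩ := Ideal.mem_span_singleton'.mp hp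
    rw [map_mul, mul_eq_zero]
    right
    simp only [map_sub, map_pow, map_mul, map_add, map_one, MvPolynomial.aeval_X,
      Matrix.cons_val_zero, Matrix.cons_val_one, Matrix.cons_val_fin_one]
    ring

@[simp]
theorem param_nodalX : param K (nodalX K) = X ^ 2 - 1 := by
  change MvPolynomial.aeval _ (MvPolynomial.X 0) = _
  simp

@[simp]
theorem param_nodalY : param K (nodalY K) = X * (X ^ 2 - 1) := by
  change MvPolynomial.aeval _ (MvPolynomial.X 1) = _
  simp

@[simp]
theorem param_aeval_nodalX (P : K[X]) : param K (aeval (nodalX K) P) = P.comp (X ^ 2 - 1) := by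
  rw [comp_eq_aeval, ← param_nodalX, aeval_algHom_apply]

theorem param_aeval_add_aeval_mul_nodalY (P Q : K[X]) :
    param K (aeval (nodalX K) P + aeval (nodalX K) Q * nodalY K) =
      P.comp (X ^ 2 - 1) + X * (X * Q).comp (X ^ 2 - 1) := by
  simp only [map_add, map_mul, param_aeval_nodalX, param_nodalY, mul_comp, X_comp]
  ring

theorem param_injective : Function.Injective (param K) := by
  refine (injective_iff_map_eq_zero _).mpr fun r hr ↦ ?_
  obtain ⟨P, Q, rfl⟩ := exists_eq_aeval_add_aeval_mul_nodalY K r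
  rw [param_aeval_add_aeval_mul_nodalY] at hr
  obtain ⟨rfl, hXQ⟩ := eq_zero_of_comp_add_X_mul_comp_eq_zero hr
  obtain rfl : Q = 0 := (mul_eq_zero.mp hXQ).resolve_left X_ne_zero
  simp

instance : IsDomain (NodalCubicRing K) := (param_injective K).isDomain (param K)

theorem param_range :
    (param K).range = Algebra.adjoin K {(X : K[X]) ^ 2 - 1, X * (X ^ 2 - 1)} := by
  have : Algebra.adjoin K {nodalX K, nodalY K} = ⊤ := by
    refine eq_top_iff.mpr fun r _ ↦ ?_
    obtain ⟨P, Q, rfl⟩ := exists_eq_aeval_add_aeval_mul_nodalY K r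
    have hx : Algebra.adjoin K {nodalX K} ≤ Algebra.adjoin K {nodalX K, nodalY K} :=
      Algebra.adjoin_mono (Set.singleton_subset_iff.mpr (Set.mem_insert _ _))
    exact add_mem (hx (aeval_mem_adjoin_singleton K _))
      (mul_mem (hx (aeval_mem_adjoin_singleton K _)) (Algebra.subset_adjoin (by simp)))
  rw [← Algebra.map_top, ← this, AlgHom.map_adjoin, Set.image_pair, param_nodalX, param_nodalY]

theorem dvd_param_of_mem_span {w : NodalCubicRing K}
    (hw : w ∈ Ideal.span {nodalX K, nodalY K}) : X ^ 2 - 1 ∣ param K w := by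
  obtain ⟨r, s, rfl⟩ := Ideal.mem_span_pair.mp hw
  simp only [map_add, map_mul, param_nodalX, param_nodalY]
  exact ⟨param K r + param K s * X, by ring⟩

theorem exists_mem_span_param_eq_of_dvd {f : K[X]} (hf : X ^ 2 - 1 ∣ f) :
    ∃ w ∈ Ideal.span {nodalX K, nodalY K}, param K w = f := by
  obtain ⟨g, rfl⟩ := hf
  obtain ⟨P, Q, rfl⟩ := exists_eq_comp_add_X_mul_comp g
  refine ⟨aeval (nodalX K) P * nodalX K + aeval (nodalX K) Q * nodalY K,
    Ideal.mem_span_pair.mpr ⟨_, _, rfl⟩, ?_⟩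
  simp only [map_add, map_mul, param_nodalX, param_nodalY, param_aeval_nodalX]
  ring

theorem mem_span_iff_dvd_param {w : NodalCubicRing K} :
    w ∈ Ideal.span {nodalX K, nodalY K} ↔ X ^ 2 - 1 ∣ param K w := by
  refine ⟨dvd_param_of_mem_span K, fun hw ↦ ?_⟩
  obtain ⟨v, hv, hvw⟩ := exists_mem_span_param_eq_of_dvd K hw
  rwa [← param_injective K hvw]

variable {K}

theorem mem_range_param_iff (h2 : (2 : K) ≠ 0) {f : K[X]} :
    f ∈ (param K).range ↔ f.eval 1 = f.eval (-1) := by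
  constructor
  · rintro ⟨r, rfl⟩
    obtain ⟨P, Q, rfl⟩ := exists_eq_aeval_add_aeval_mul_nodalY K r
    simp [param_aeval_add_aeval_mul_nodalY, eval_comp]
  · intro hf
    obtain ⟨w, -, hw⟩ := exists_mem_span_param_eq_of_dvd K (f := f - C (f.eval 1))
      ((X_sq_sub_one_dvd_iff h2).mpr (by simp [hf]))
    exact ⟨w + algebraMap K _ (f.eval 1), by simp [hw]⟩

theorem mul_add_mul_eq_zero_iff {a b r s : NodalCubicRing K} {D A B : K[X]} (hD : D ≠ 0)
    (ha : param K a = D * A) (hb : param K b = D * B) :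
    r * a + s * b = 0 ↔ param K r * A + param K s * B = 0 := by
  rw [← map_eq_zero_iff _ (param_injective K), map_add, map_mul, map_mul, ha, hb,
    show param K r * (D * A) + param K s * (D * B) = D * (param K r * A + param K s * B) by ring,
    mul_eq_zero, or_iff_right hD]

theorem mem_relFittingIdeal_of_param_eq_mul {a b : NodalCubicRing K} {D A B : K[X]}
    (ha : param K a = D * A) (hb : param K b = D * B) {c : K[X]} (hc : X ^ 2 - 1 ∣ c)
    {r : NodalCubicRing K} (hr : param K r = c * B) : r ∈ relFittingIdeal a b := by
  obtain ⟨s, -, hs⟩ := exists_mem_span_param_eq_of_dvd K (hc.mul_right A).neg_right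
  refine Ideal.subset_span (Or.inl ⟨s, param_injective K ?_⟩)
  simp only [map_add, map_mul, map_zero, ha, hb, hr, hs]
  ring

theorem span_le_relFittingIdeal {a b : NodalCubicRing K} {D A B : K[X]}
    (ha : param K a = D * A) (hb : param K b = D * B) (hAB : IsCoprime A B) :
    Ideal.span {nodalX K, nodalY K} ≤ relFittingIdeal a b := by
  obtain ⟨U, V, hUV⟩ := hAB
  intro w hw
  have hdvd := dvd_param_of_mem_span K hw
  obtain ⟨e₁, -, he₁⟩ := exists_mem_span_param_eq_of_dvd K (hdvd.mul_right (V * B))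
  obtain ⟨e₂, -, he₂⟩ := exists_mem_span_param_eq_of_dvd K (hdvd.mul_right (U * A))
  have hw : w = e₁ + e₂ := param_injective K (by
    rw [map_add, he₁, he₂]
    linear_combination (-param K w) * hUV)
  rw [hw]
  refine add_mem (mem_relFittingIdeal_of_param_eq_mul ha hb (hdvd.mul_right V) ?_) ?_
  · rw [he₁, mul_assoc]
  · rw [relFittingIdeal_comm]
    exact mem_relFittingIdeal_of_param_eq_mul hb ha (hdvd.mul_right U) (by rw [he₂, mul_assoc])

theorem relFittingIdeal_le_span (h2 : (2 : K) ≠ 0) {a b : NodalCubicRing K} {D A B : K[X]}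
    (hD : D ≠ 0) (ha : param K a = D * A) (hb : param K b = D * B) (hAB : IsCoprime A B)
    (hΔ : A.eval 1 * B.eval (-1) ≠ A.eval (-1) * B.eval 1) :
    relFittingIdeal a b ≤ Ideal.span {nodalX K, nodalY K} := by
  have hS : ∀ r, (param K r).eval 1 = (param K r).eval (-1) := fun r ↦
    (mem_range_param_iff h2).mp ⟨r, rfl⟩
  rw [relFittingIdeal, Ideal.span_le]
  rintro r (⟨s, hs⟩ | ⟨s, hs⟩) <;> rw [SetLike.mem_coe, mem_span_iff_dvd_param]
  · exact X_sq_sub_one_dvd_of_mul_add_mul_eq_zero h2 hAB hΔ (hS r) (hS s)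
      ((mul_add_mul_eq_zero_iff hD ha hb).mp hs)
  · refine X_sq_sub_one_dvd_of_mul_add_mul_eq_zero h2 hAB.symm ?_ (hS r) (hS s)
      ((mul_add_mul_eq_zero_iff hD hb ha).mp (by rw [← hs, add_comm]))
    rwa [mul_comm, mul_comm (B.eval (-1)), ne_comm]

theorem exists_mul_algebraMap_eq (P : K[X]) {D : K[X]} (hD : D ≠ 0) :
    ∃ h : FractionRing (NodalCubicRing K), ∀ c w : NodalCubicRing K,
      param K c * P = D * param K w → h * algebraMap _ _ c = algebraMap _ _ w := by
  obtain ⟨n, -, hn⟩ := exists_mem_span_param_eq_of_dvd K (dvd_mul_right (X ^ 2 - 1) (P * D))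
  obtain ⟨m, -, hm⟩ := exists_mem_span_param_eq_of_dvd K (dvd_mul_right (X ^ 2 - 1) (D * D))
  have hm0 : algebraMap _ (FractionRing (NodalCubicRing K)) m ≠ 0 := by
    rw [Ne, IsFractionRing.to_map_eq_zero_iff]
    rintro rfl
    exact X_pow_sub_C_ne_zero two_pos (1 : K) (by simpa [hD, eq_comm (a := (0 : K[X]))] using hm)
  -- `n / m` is `P / D`, with both terms multiplied by `(X² - 1) D` to lie in the image of `param`
  refine ⟨algebraMap _ _ n / algebraMap _ _ m, fun c w hcw ↦ ?_⟩
  have hnc : n * c = m * w := param_injective K (by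
    rw [map_mul, map_mul, hn, hm]
    linear_combination ((X ^ 2 - 1) * D) * hcw)
  rw [div_mul_eq_mul_div, div_eq_iff hm0, ← map_mul, hnc, map_mul, mul_comm]

theorem map_span_pair_mul_one_div_eq_one_of_eval (h2 : (2 : K) ≠ 0) {a b : NodalCubicRing K}
    {D A B : K[X]} (hD : D ≠ 0) (ha : param K a = D * A) (hb : param K b = D * B)
    (hAB : IsCoprime A B) (hΔ : A.eval 1 * B.eval (-1) = A.eval (-1) * B.eval 1) :
    Submodule.map (Algebra.linearMap (NodalCubicRing K) (FractionRing (NodalCubicRing K)))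
        (Ideal.span {a, b}) *
      (1 / Submodule.map (Algebra.linearMap (NodalCubicRing K)
        (FractionRing (NodalCubicRing K))) (Ideal.span {a, b})) = 1 := by
  obtain ⟨P, Q, hPQ, hS⟩ := exists_mul_add_mul_eq_one_of_eval h2 hAB hΔ
  obtain ⟨wPA, hPA⟩ : ∃ w, param K w = P * A :=
    (mem_range_param_iff h2).mpr (hS P (by simp) A (by simp))
  obtain ⟨wPB, hPB⟩ : ∃ w, param K w = P * B :=
    (mem_range_param_iff h2).mpr (hS P (by simp) B (by simp))
  obtain ⟨wQA, hQA⟩ : ∃ w, param K w = Q * A :=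
    (mem_range_param_iff h2).mpr (hS Q (by simp) A (by simp))
  obtain ⟨wQB, hQB⟩ : ∃ w, param K w = Q * B :=
    (mem_range_param_iff h2).mpr (hS Q (by simp) B (by simp))
  obtain ⟨h₁, hh₁⟩ := exists_mul_algebraMap_eq P hD
  obtain ⟨h₂, hh₂⟩ := exists_mul_algebraMap_eq Q hD
  have e₁ := hh₁ a wPA (by rw [ha, hPA]; ring)
  have e₂ := hh₁ b wPB (by rw [hb, hPB]; ring)
  have e₃ := hh₂ a wQA (by rw [ha, hQA]; ring)
  have e₄ := hh₂ b wQB (by rw [hb, hQB]; ring)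
  have hsum : wPA + wQB = 1 := param_injective K (by rw [map_add, hPA, hQB, hPQ, map_one])
  have mem_one : ∀ {x : FractionRing (NodalCubicRing K)} {w : NodalCubicRing K},
      x = algebraMap _ _ w → x ∈ (1 : Submodule (NodalCubicRing K) _) := fun e ↦
    Submodule.mem_one.mpr ⟨_, e.symm⟩
  refine Submodule.map_span_pair_mul_one_div_eq_one (mem_one e₁) (mem_one e₂) (mem_one e₃)
    (mem_one e₄) ?_
  rw [mul_comm, e₁, mul_comm, e₄, ← map_add, hsum, map_one]

end NodalCubicRing

open NodalCubicRing in
/-- Let `char K ≠ 2` and `R = K[x,y]/(y² - x²(x+1))`.  The assignment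
`x ↦ z² - 1`, `y ↦ z(z² - 1)` induces an injective `K`-algebra homomorphism from `R`
onto the subring `K[z² - 1, z(z² - 1)]` of `K[z]`; and for every nonzero non-invertible
ideal `I` of `R` (with generating pair `(a, b)`), `Fitt₁(I)` is the conductor
`K[z](z² - 1)` viewed in `R`, namely the ideal generated by the images of `x` and `y`. -/
theorem nodal_cubic_fitting (K : Type) [Field K] (h2 : (2 : K) ≠ 0) :
    (∃ φ : NodalCubicRing K →ₐ[K] Polynomial K,
      Function.Injective φ ∧
      φ (nodalX K) = Polynomial.X ^ 2 - 1 ∧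
      φ (nodalY K) = Polynomial.X * (Polynomial.X ^ 2 - 1) ∧
      φ.range = Algebra.adjoin K
        {(Polynomial.X : Polynomial K) ^ 2 - 1,
          Polynomial.X * (Polynomial.X ^ 2 - 1)}) ∧
    (∀ (I : Ideal (NodalCubicRing K)) (a b : NodalCubicRing K),
      I = Ideal.span {a, b} → I ≠ ⊥ →
      ¬ (Submodule.map (Algebra.linearMap (NodalCubicRing K)
            (FractionRing (NodalCubicRing K))) I *
          ((1 : Submodule (NodalCubicRing K) (FractionRing (NodalCubicRing K))) /
            Submodule.map (Algebra.linearMap (NodalCubicRing K)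
              (FractionRing (NodalCubicRing K))) I) = 1) →
      relFittingIdeal a b = Ideal.span {nodalX K, nodalY K}) := by
  classical
  refine ⟨⟨param K, param_injective K, param_nodalX K, param_nodalY K, param_range K⟩, ?_⟩
  rintro I a b rfl hI hninv
  have hab : param K a ≠ 0 ∨ param K b ≠ 0 := by
    by_contra! h
    simp [(map_eq_zero_iff _ (param_injective K)).mp h.1,
      (map_eq_zero_iff _ (param_injective K)).mp h.2] at hI
  obtain ⟨D, A, B, hD, ha, hb, hAB⟩ := exists_eq_mul_isCoprime hab
  by_cases hΔ : A.eval 1 * B.eval (-1) = A.eval (-1) * B.eval 1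
  · exact absurd (map_span_pair_mul_one_div_eq_one_of_eval h2 hD ha hb hAB hΔ) hninv
  · exact le_antisymm (relFittingIdeal_le_span h2 hD ha hb hAB hΔ)
      (span_le_relFittingIdeal ha hb hAB)
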